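/- Let q be a prime power, m ≥ 1, and 2 ≤ λ < m. Let C = GRS_k(x, y) be a generalised Reed–Solomon code of length n and dimension k ≥ 1 over F_{q^m}, and let S ⊆ F_{q^m} be an F_q-subspace of dimension λ with S² = F_{q^m}. Let B_S = (γ_0, …, γ_{λ-1}) be an F_q-basis of S; list the products γ_r γ_s (0 ≤ r ≤ s ≤ λ−1) in the order given by the index C(s+1,2)+r, let B_{S²} consist of the first m elements of this list, and assume B_{S²} is an F_q-basis of F_{q^m}. Let K(λ,m) = {C(λ+1,2)·i + j : 0 ≤ i ≤ n−1, m ≤ j ≤ C(λ+1,2)−1}. Then dim_{F_q} Short_{K(λ,m)}( (Exp_{B_S}(C|_S))^{~⋆2} ) ≤ min{ mn, m(2k−1) }. -/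
import Mathlib


open Module

/-- The generalised Reed–Solomon code of dimension (at most) `k` with support `x`
and multiplier `y`: the image of polynomials of degree `< k` under
`f ↦ (y i * f(x i))_i`. -/
noncomputable def GRS (F : Type*) [Field F] (n k : ℕ) (x y : Fin n → F) :
    Submodule F (Fin n → F) :=
  (Polynomial.degreeLT F k).map
    (LinearMap.pi fun i => y i • Polynomial.leval (x i))

/-- The square `S²` of a subspace `S ⊆ F`: the `K`-span of all products of two
elements of `S`. -/
def sqSubspace {K F : Type*} [Field K] [Field F] [Algebra K F] (S : Submodule K F) :
    Submodule K F :=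
  Submodule.span K {x | ∃ a ∈ S, ∃ b ∈ S, x = a * b}

/-- The index set of the blocks of a twisted product: pairs `(r, s)` with
`0 ≤ r ≤ s ≤ λ - 1`. -/
abbrev IdxPairs (lam : ℕ) := {p : Fin lam × Fin lam // p.1 ≤ p.2}

/-- The numeric index `C(s+1, 2) + r` of the pair `(r, s)` within a block of a twisted
product. -/
def pairIdx {lam : ℕ} (p : IdxPairs lam) : ℕ :=
  Nat.choose ((p.1.2 : ℕ) + 1) 2 + (p.1.1 : ℕ)

/-- The twisted product of two vectors of `F_q^{λn}` (entries grouped in blocks of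
length `λ`): in block `i`, the entry of index `(r, s)` (i.e. `C(s+1,2) + r`) is
`a_{i,r}b_{i,s} + a_{i,s}b_{i,r}` if `r < s` and `a_{i,r}b_{i,r}` if `r = s`. -/
def twStar {K : Type*} [CommRing K] {n lam : ℕ} (a b : Fin n × Fin lam → K) :
    Fin n × IdxPairs lam → K :=
  fun q =>
    if q.2.1.1 = q.2.1.2 then a (q.1, q.2.1.1) * b (q.1, q.2.1.1)
    else a (q.1, q.2.1.1) * b (q.1, q.2.1.2) + a (q.1, q.2.1.2) * b (q.1, q.2.1.1)

/-- The expansion `Exp_{B_S}(C|_S)` of the subspace subcode of `C` over the basis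
`γ = (γ_0, …, γ_{λ-1})` of `S = span(range γ)`: the set of coordinate vectors
(w.r.t. `γ`) of codewords of `C` with all entries in `S`. -/
def expSet (K : Type*) {F : Type*} [Field K] [Field F] [Algebra K F] {n lam : ℕ}
    (γ : Fin lam → F) (C : Submodule F (Fin n → F)) : Set (Fin n × Fin lam → K) :=
  {v | ∃ c, c ∈ C ∧ (∀ i, c i ∈ Submodule.span K (Set.range γ)) ∧
        ∀ i, c i = ∑ j, v (i, j) • γ j}

/-- The subspace of vectors vanishing on a set `L` of coordinates. -/
def vanishOn {K : Type*} [Field K] {ι : Type*} (L : Set ι) : Submodule K (ι → K) where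
  carrier := {u | ∀ i ∈ L, u i = 0}
  add_mem' := by
    intro u v hu hv i hi
    simp [hu i hi, hv i hi]
  zero_mem' := fun i _ => rfl
  smul_mem' := by
    intro c u hu i hi
    simp [hu i hi]

/-- Deleting the coordinates of numeric index `≥ m` in each block, as a linear map
(used to realise the shortening `Short_{K(λ,m)}`). -/
def restrictCoords (K : Type*) [Field K] (n lam m : ℕ) :
    (Fin n × IdxPairs lam → K) →ₗ[K]
      (Fin n × {p : IdxPairs lam // pairIdx p < m} → K) where
  toFun u := fun q => u (q.1, q.2.1)
  map_add' _ _ := rfl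
  map_smul' _ _ := rfl

lemma pairIdx_lt {lam : ℕ} (p : IdxPairs lam) :
    pairIdx p < Nat.choose ((p.1.2 : ℕ) + 2) 2 := by
  have h : Nat.choose ((p.1.2 : ℕ) + 2) 2 = ((p.1.2 : ℕ) + 1) + Nat.choose ((p.1.2 : ℕ) + 1) 2 := by
    rw [Nat.choose_succ_succ ((p.1.2 : ℕ) + 1) 1, Nat.choose_one_right]
  have hr : (p.1.1 : ℕ) ≤ (p.1.2 : ℕ) := p.2
  unfold pairIdx
  omega

lemma pairIdx_injective {lam : ℕ} : Function.Injective (pairIdx (lam := lam)) := by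
  intro p q h
  have key : ∀ a b : IdxPairs lam, (a.1.2 : ℕ) < (b.1.2 : ℕ) → pairIdx a < pairIdx b := by
    intro a b hab
    have h1 := pairIdx_lt a
    have h2 : Nat.choose ((a.1.2 : ℕ) + 2) 2 ≤ Nat.choose ((b.1.2 : ℕ) + 1) 2 :=
      Nat.choose_le_choose 2 (by omega)
    have h3 : Nat.choose ((b.1.2 : ℕ) + 1) 2 ≤ pairIdx b := Nat.le_add_right _ _
    omega
  have hs : (p.1.2 : ℕ) = (q.1.2 : ℕ) := by
    rcases lt_trichotomy (p.1.2 : ℕ) (q.1.2 : ℕ) with h' | h' | h'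
    · exact absurd h (by have := key p q h'; omega)
    · exact h'
    · exact absurd h (by have := key q p h'; omega)
  have hr : (p.1.1 : ℕ) = (q.1.1 : ℕ) := by
    have hc : Nat.choose ((p.1.2 : ℕ) + 1) 2 = Nat.choose ((q.1.2 : ℕ) + 1) 2 := by rw [hs]
    unfold pairIdx at h; omega
  exact Subtype.ext (Prod.ext (Fin.ext hr) (Fin.ext hs))

open Finset in
lemma sum_prod_eq_sum_idxPairs {R : Type*} [AddCommMonoid R] {lam : ℕ}
    (G : Fin lam × Fin lam → R) :
    ∑ p : Fin lam × Fin lam, G p =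
      ∑ p : IdxPairs lam,
        (if p.1.1 = p.1.2 then G (p.1.1, p.1.2) else G (p.1.1, p.1.2) + G (p.1.2, p.1.1)) := by
  classical
  have hsub : ∑ p : IdxPairs lam,
      (if p.1.1 = p.1.2 then G (p.1.1, p.1.2) else G (p.1.1, p.1.2) + G (p.1.2, p.1.1)) =
      ∑ q ∈ univ.filter (fun q : Fin lam × Fin lam => q.1 ≤ q.2),
        (if q.1 = q.2 then G q else G q + G (q.2, q.1)) := by
    exact (Finset.sum_subtype (univ.filter (fun q : Fin lam × Fin lam => q.1 ≤ q.2))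
      (fun x => by simp) (fun q => if q.1 = q.2 then G q else G q + G (q.2, q.1))).symm
  rw [hsub]
  rw [← Finset.sum_filter_add_sum_filter_not univ (fun q : Fin lam × Fin lam => q.1 ≤ q.2) G]
  rw [← Finset.sum_filter_add_sum_filter_not (univ.filter (fun q : Fin lam × Fin lam => q.1 ≤ q.2))
    (fun q => q.1 = q.2) G]
  rw [← Finset.sum_filter_add_sum_filter_not (univ.filter (fun q : Fin lam × Fin lam => q.1 ≤ q.2))
    (fun q => q.1 = q.2) (fun q => if q.1 = q.2 then G q else G q + G (q.2, q.1))]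
  have e1 : ∑ q ∈ ((univ.filter (fun q : Fin lam × Fin lam => q.1 ≤ q.2)).filter
      (fun q => q.1 = q.2)), (if q.1 = q.2 then G q else G q + G (q.2, q.1)) =
      ∑ q ∈ ((univ.filter (fun q : Fin lam × Fin lam => q.1 ≤ q.2)).filter
      (fun q => q.1 = q.2)), G q := by
    apply Finset.sum_congr rfl
    intro q hq
    simp only [mem_filter] at hq
    simp [hq.2]
  have e2 : ∑ q ∈ ((univ.filter (fun q : Fin lam × Fin lam => q.1 ≤ q.2)).filter
      (fun q => ¬ q.1 = q.2)), (if q.1 = q.2 then G q else G q + G (q.2, q.1)) =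
      ∑ q ∈ ((univ.filter (fun q : Fin lam × Fin lam => q.1 ≤ q.2)).filter
      (fun q => ¬ q.1 = q.2)), (G q + G (q.2, q.1)) := by
    apply Finset.sum_congr rfl
    intro q hq
    simp only [mem_filter] at hq
    simp [hq.2]
  rw [e1, e2, Finset.sum_add_distrib]
  have e3 : ∑ q ∈ (univ.filter (fun q : Fin lam × Fin lam => ¬ q.1 ≤ q.2)), G q =
      ∑ q ∈ ((univ.filter (fun q : Fin lam × Fin lam => q.1 ≤ q.2)).filter
      (fun q => ¬ q.1 = q.2)), G (q.2, q.1) := by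
    apply Finset.sum_nbij' (fun q => (q.2, q.1)) (fun q => (q.2, q.1))
    · intro a ha
      simp only [mem_filter, mem_univ, true_and, not_le] at ha ⊢
      exact ⟨le_of_lt ha, ne_of_lt ha⟩
    · intro a ha
      simp only [mem_filter, mem_univ, true_and, not_le] at ha ⊢
      exact lt_of_le_of_ne ha.1 ha.2
    · intro a _; rfl
    · intro a _; rfl
    · intro a _; rfl
  rw [e3]
  abel


lemma withbot_deg_aux {a b : WithBot ℕ} {k : ℕ} (hk : 1 ≤ k)
    (ha : a < (k : WithBot ℕ)) (hb : b < (k : WithBot ℕ)) :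
    a + b < ((2 * k - 1 : ℕ) : WithBot ℕ) := by
  simp only [Nat.cast_withBot, Nat.cast_id] at ha hb ⊢
  cases a with
  | bot => rw [WithBot.bot_add]; exact WithBot.bot_lt_coe _
  | coe a =>
    cases b with
    | bot => rw [WithBot.add_bot]; exact WithBot.bot_lt_coe _
    | coe b =>
      have ha' : a < k := WithBot.coe_lt_coe.mp ha
      have hb' : b < k := WithBot.coe_lt_coe.mp hb
      rw [← WithBot.coe_add]
      exact WithBot.coe_lt_coe.mpr (by omega)

noncomputable def phiMap (K : Type*) {F : Type*} [Field K] [Field F] [Algebra K F]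
    {n lam m : ℕ} (Bsq : Basis (Fin m) K F) :
    (Fin n × {p : IdxPairs lam // pairIdx p < m} → K) →ₗ[K] (Fin n → F) where
  toFun u := fun i => ∑ q : {p : IdxPairs lam // pairIdx p < m},
    u (i, q) • Bsq ⟨pairIdx q.1, q.2⟩
  map_add' u v := by funext i; simp [add_smul, Finset.sum_add_distrib]
  map_smul' c u := by funext i; simp [Finset.smul_sum, mul_smul]

@[simp] lemma phiMap_apply (K : Type*) {F : Type*} [Field K] [Field F] [Algebra K F]
    {n lam m : ℕ} (Bsq : Basis (Fin m) K F)
    (u : Fin n × {p : IdxPairs lam // pairIdx p < m} → K) (i : Fin n) :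
    phiMap K Bsq u i = ∑ q : {p : IdxPairs lam // pairIdx p < m},
      u (i, q) • Bsq ⟨pairIdx q.1, q.2⟩ := rfl

noncomputable def psiMap (K : Type*) {F : Type*} [Field K] [Field F] [Algebra K F]
    {n lam : ℕ} (γ : Fin lam → F) :
    (Fin n × IdxPairs lam → K) →ₗ[K] (Fin n → F) where
  toFun u := fun i => ∑ p : IdxPairs lam, u (i, p) • (γ p.1.1 * γ p.1.2)
  map_add' u v := by funext i; simp [add_smul, Finset.sum_add_distrib]
  map_smul' c u := by funext i; simp [Finset.smul_sum, mul_smul]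

@[simp] lemma psiMap_apply (K : Type*) {F : Type*} [Field K] [Field F] [Algebra K F]
    {n lam : ℕ} (γ : Fin lam → F) (u : Fin n × IdxPairs lam → K) (i : Fin n) :
    psiMap K γ u i = ∑ p : IdxPairs lam, u (i, p) • (γ p.1.1 * γ p.1.2) := rfl

@[simp] lemma restrictCoords_apply (K : Type*) [Field K] (n lam m : ℕ)
    (u : Fin n × IdxPairs lam → K) (q : Fin n × {p : IdxPairs lam // pairIdx p < m}) :
    restrictCoords K n lam m u q = u (q.1, q.2.1) := rfl

set_option maxHeartbeats 1000000

/-- for a GRS code `C = GRS_k(x,y)` over `F_{q^m}` and a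
`λ`-dimensional subspace `S` with `S² = F_{q^m}` (where `2 ≤ λ < m`), the shortening
at `K(λ,m)` of the twisted square of `Exp_{B_S}(C|_S)` has `F_q`-dimension at most
`min(mn, m(2k-1))`. -/
theorem stmt_19 {K F : Type*} [Field K] [Fintype K] [Field F] [Algebra K F]
    {m lam n k : ℕ} (hlam : 2 ≤ lam) (hlm : lam < m) (hk : 1 ≤ k)
    (x y : Fin n → F) (hx : Function.Injective x) (hy : ∀ i, y i ≠ 0)
    (γ : Fin lam → F) (hγ : LinearIndependent K γ)
    (hSsq : sqSubspace (Submodule.span K (Set.range γ)) = ⊤)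
    (Bsq : Basis (Fin m) K F)
    (hBsq : ∀ (p : IdxPairs lam) (h : pairIdx p < m),
      Bsq ⟨pairIdx p, h⟩ = γ p.1.1 * γ p.1.2) :
    finrank K
        ((Submodule.span K
            {u : Fin n × IdxPairs lam → K |
              ∃ v ∈ expSet K γ (GRS F n k x y),
                ∃ w ∈ expSet K γ (GRS F n k x y), u = twStar v w} ⊓
          vanishOn {q : Fin n × IdxPairs lam | m ≤ pairIdx q.2}).map
          (restrictCoords K n lam m)) ≤
      min (m * n) (m * (2 * k - 1)) := by
  classical
  haveI : Module.Finite K F := Module.Finite.of_basis Bsq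
  haveI : Module.Finite K (Fin n → F) := Module.Finite.trans F _
  set C2 := GRS F n (2 * k - 1) x (fun i => y i * y i) with hC2def
  set genSet : Set (Fin n × IdxPairs lam → K) :=
    {u : Fin n × IdxPairs lam → K |
      ∃ v ∈ expSet K γ (GRS F n k x y),
        ∃ w ∈ expSet K γ (GRS F n k x y), u = twStar v w} with hgenSet
  set L : Set (Fin n × IdxPairs lam) := {q : Fin n × IdxPairs lam | m ≤ pairIdx q.2} with hL
  set M : Submodule K (Fin n × IdxPairs lam → K) :=
    Submodule.span K genSet ⊓ vanishOn L with hM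
  set Φ : (Fin n × {p : IdxPairs lam // pairIdx p < m} → K) →ₗ[K] (Fin n → F) :=
    phiMap K Bsq with hΦ
  have hΦinj : Function.Injective Φ := by
    rw [← LinearMap.ker_eq_bot, LinearMap.ker_eq_bot']
    intro u hu
    have hLI : LinearIndependent K (fun q : {p : IdxPairs lam // pairIdx p < m} =>
        Bsq ⟨pairIdx q.1, q.2⟩) := by
      apply Bsq.linearIndependent.comp
      intro a b hab
      apply Subtype.ext
      apply pairIdx_injective
      simpa [Fin.ext_iff] using hab
    funext q
    obtain ⟨i, p⟩ := q
    have h0 : ∑ q : {p : IdxPairs lam // pairIdx p < m},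
        u (i, q) • Bsq ⟨pairIdx q.1, q.2⟩ = 0 := by
      have := congrFun hu i
      rwa [hΦ, phiMap_apply] at this
    exact Fintype.linearIndependent_iff.mp hLI (fun q => u (i, q)) h0 p
  set Ψ : (Fin n × IdxPairs lam → K) →ₗ[K] (Fin n → F) := psiMap K γ with hΨ
  have hAgree : ∀ u ∈ vanishOn (K := K) L,
      Φ (restrictCoords K n lam m u) = Ψ u := by
    intro u hu
    funext i
    rw [hΦ, hΨ, phiMap_apply, psiMap_apply]
    simp only [restrictCoords_apply]
    have e1 : ∑ q : {p : IdxPairs lam // pairIdx p < m}, u (i, q.1) • Bsq ⟨pairIdx q.1, q.2⟩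
        = ∑ q : {p : IdxPairs lam // pairIdx p < m},
            u (i, q.1) • (γ q.1.1.1 * γ q.1.1.2) := by
      exact Finset.sum_congr rfl fun q _ => by rw [hBsq q.1 q.2]
    rw [e1]
    rw [← Finset.sum_subtype (Finset.univ.filter (fun p : IdxPairs lam => pairIdx p < m))
      (fun p => by simp) (fun p : IdxPairs lam => u (i, p) • (γ p.1.1 * γ p.1.2))]
    apply Finset.sum_subset (Finset.filter_subset _ _)
    intro p _ hp
    simp only [Finset.mem_filter, Finset.mem_univ, true_and, not_lt] at hp
    have : u (i, p) = 0 := hu (i, p) hp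
    rw [this, zero_smul]
  have hGen : ∀ u ∈ genSet, Ψ u ∈ Submodule.restrictScalars K C2 := by
    rintro u ⟨v, ⟨c, hcC, -, hcv⟩, w, ⟨d, hdC, -, hdw⟩, rfl⟩
    simp only [GRS] at hcC hdC
    obtain ⟨f, hf, hfc⟩ := Submodule.mem_map.mp hcC
    obtain ⟨g, hg, hgd⟩ := Submodule.mem_map.mp hdC
    have key : Ψ (twStar v w) = fun i => c i * d i := by
      funext i
      rw [hΨ, psiMap_apply, hcv i, hdw i]
      have h1 : (∑ j, v (i, j) • γ j) * (∑ j, w (i, j) • γ j)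
          = ∑ p : Fin lam × Fin lam, (v (i, p.1) * w (i, p.2)) • (γ p.1 * γ p.2) := by
        rw [Finset.sum_mul_sum, Fintype.sum_prod_type]
        exact Finset.sum_congr rfl fun j _ => Finset.sum_congr rfl fun j' _ =>
          (smul_mul_smul_comm _ _ _ _)
      rw [h1, sum_prod_eq_sum_idxPairs
        (fun p : Fin lam × Fin lam => (v (i, p.1) * w (i, p.2)) • (γ p.1 * γ p.2))]
      apply Finset.sum_congr rfl
      intro p _
      by_cases h : p.1.1 = p.1.2
      · simp [twStar, h]
      · simp only [twStar, h, if_false]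
        rw [add_smul]
        congr 1
        rw [mul_comm (γ p.1.2) (γ p.1.1)]
    rw [key, Submodule.restrictScalars_mem, hC2def]
    simp only [GRS]
    refine Submodule.mem_map.mpr ⟨f * g, ?_, ?_⟩
    · rw [Polynomial.mem_degreeLT] at hf hg ⊢
      rw [Polynomial.degree_mul]
      exact withbot_deg_aux hk hf hg
    · funext i
      have hci : c i = y i * f.eval (x i) := by
        rw [← hfc]; simp [LinearMap.pi_apply, smul_eq_mul]
      have hdi : d i = y i * g.eval (x i) := by
        rw [← hgd]; simp [LinearMap.pi_apply, smul_eq_mul]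
      simp [LinearMap.pi_apply, smul_eq_mul, Polynomial.eval_mul, hci, hdi]
      ring
  have hsub : M.map (Φ ∘ₗ restrictCoords K n lam m) ≤ Submodule.restrictScalars K C2 := by
    rintro z ⟨u, hu, rfl⟩
    rw [LinearMap.comp_apply, hAgree u hu.2]
    have : Ψ u ∈ Submodule.map Ψ (Submodule.span K genSet) :=
      Submodule.mem_map_of_mem hu.1
    rw [Submodule.map_span] at this
    have hle : Submodule.span K (Ψ '' genSet) ≤ Submodule.restrictScalars K C2 := by
      rw [Submodule.span_le]
      rintro z ⟨u, hu, rfl⟩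
      exact hGen u hu
    exact hle this
  -- finrank bookkeeping
  have ecomp : (M.map (restrictCoords K n lam m)).map Φ
      = M.map (Φ ∘ₗ restrictCoords K n lam m) := (Submodule.map_comp _ _ M).symm
  have e1 : finrank K (M.map (restrictCoords K n lam m)) =
      finrank K ((M.map (restrictCoords K n lam m)).map Φ) :=
    (Submodule.equivMapOfInjective Φ hΦinj _).finrank_eq
  have cardbound : Fintype.card {p : IdxPairs lam // pairIdx p < m} ≤ m := by
    have : Function.Injective (fun q : {p : IdxPairs lam // pairIdx p < m} =>
        (⟨pairIdx q.1, q.2⟩ : Fin m)) := by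
      intro a b h
      exact Subtype.ext (pairIdx_injective (by simpa [Fin.ext_iff] using h))
    simpa using Fintype.card_le_of_injective _ this
  have bound1 : finrank K (M.map (restrictCoords K n lam m)) ≤ m * n := by
    calc finrank K (M.map (restrictCoords K n lam m))
        ≤ finrank K (Fin n × {p : IdxPairs lam // pairIdx p < m} → K) :=
          Submodule.finrank_le _
      _ = n * Fintype.card {p : IdxPairs lam // pairIdx p < m} := by
          rw [Module.finrank_pi, Fintype.card_prod, Fintype.card_fin]
      _ ≤ n * m := Nat.mul_le_mul_left _ cardbound
      _ = m * n := Nat.mul_comm _ _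
  haveI : Module.Finite F ↥(Polynomial.degreeLT F (2 * k - 1)) :=
    Module.Finite.equiv (Polynomial.degreeLTEquiv F (2 * k - 1)).symm
  have hC2dim : finrank F C2 ≤ 2 * k - 1 := by
    calc finrank F C2 ≤ finrank F (Polynomial.degreeLT F (2 * k - 1)) :=
          Submodule.finrank_map_le _ _
      _ = 2 * k - 1 := by
          rw [(Polynomial.degreeLTEquiv F (2 * k - 1)).finrank_eq, Module.finrank_fin_fun]
  have bound2 : finrank K (M.map (restrictCoords K n lam m)) ≤ m * (2 * k - 1) := by
    rw [e1, ecomp]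
    calc finrank K (M.map (Φ ∘ₗ restrictCoords K n lam m))
        ≤ finrank K (Submodule.restrictScalars K C2) := Submodule.finrank_mono hsub
      _ = finrank K C2 := ((Submodule.restrictScalarsEquiv K F (Fin n → F) C2).restrictScalars K).finrank_eq
      _ = finrank K F * finrank F C2 := (Module.finrank_mul_finrank K F C2).symm
      _ ≤ m * (2 * k - 1) := by
          rw [Module.finrank_eq_card_basis Bsq, Fintype.card_fin]
          exact Nat.mul_le_mul_left m hC2dim
  exact le_min bound1 bound2
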